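/- The set of points (x,y) in the open triangle Δ = {(x,y) ∈ ℝ² : 1 > x > y > 0} for which there exists a sequence i : ℕ → {0,1} with (x,y) ∈ Δ_{(e,12,e)}(i₁,…,iₙ) for every n ≥ 1 and lim_{n→∞} (1/n)·#{k ≤ n : i_k = 1} = 1/2, has two-dimensional Lebesgue measure zero. (This is the key step showing that the Minkowski question mark analog Φ(e,12,e) of the degenerate Farey class is singular.) -/

import Mathlib

open Matrix MeasureTheory Filter

noncomputable section

/-- Projection π(a,b,c) = (b/a, c/a). -/
def projPt (v : Fin 3 → ℝ) : ℝ × ℝ := (v 1 / v 0, v 2 / v 0)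

def Vmat : Matrix (Fin 3) (Fin 3) ℝ := !![1,1,1; 0,1,1; 0,0,1]

def prodSeq (C : Fin 2 → Matrix (Fin 3) (Fin 3) ℝ) (i : ℕ → Fin 2) :
    ℕ → Matrix (Fin 3) (Fin 3) ℝ
  | 0 => 1
  | n + 1 => prodSeq C i n * C (i (n + 1))

/-- The subtriangle: convex hull of the π-images of the columns of V·C_{i₁}⋯C_{iₙ}. -/
def subTri (C : Fin 2 → Matrix (Fin 3) (Fin 3) ℝ) (i : ℕ → Fin 2) (n : ℕ) :
    Set (ℝ × ℝ) :=
  convexHull ℝ (Set.range fun j : Fin 3 => projPt fun k => (Vmat * prodSeq C i n) k j)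

/-- The Farey matrices F₀(e,12,e), F₁(e,12,e). -/
def Fe12e : Fin 2 → Matrix (Fin 3) (Fin 3) ℝ :=
  ![!![0,0,1; 0,1,0; 1,0,1], !![1,0,1; 0,1,0; 0,0,1]]

/-!
Put `G₀ = !![0, 1; 1, 1]` and `G₁ = !![1, 1; 0, 1]`. Since `F_d(e,12,e)` acts as `G_d` on the
first and last coordinates, the `n`-th subtriangle is the triangle with vertices `(1, 0)`,
`(p, p)`, `(r, r)` read off from `M = G_{i₁} ⋯ G_{iₙ}`, and its area is at most
`1 / (u₁ u₂)` where `(u₁, u₂)` are the column sums of `M` (because `|det M| = 1`).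

If the frequency of ones tends to `1/2`, then among the first `100 j` letters at least `49 j`
are zeros once `j` is large. Weighting each word by `(6/5) ^ #zeros` (a Chernoff bound), the
triangles of such words have total area at most `(6/5) ^ (-49 j)` times the weighted sum over
all words of length `100 j`, and an explicit two-step inequality bounds the weighted sum over
words of length `2 m` by `(88/75) ^ m`. So the covering sets have measure at most `ρ ^ j` with
`ρ = (88/75)^50 / (6/5)^49 < 1`, and every point in question lies in their `liminf`, which is
null by Borel–Cantelli.
-/

theorem volume_convexHull_triple_le (a b c : ℝ × ℝ) :
    volume (convexHull ℝ {a, b, c}) ≤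
      ENNReal.ofReal |(b.1 - a.1) * (c.2 - a.2) - (c.1 - a.1) * (b.2 - a.2)| := by
  set L := Matrix.toLin (Module.Basis.finTwoProd ℝ) (Module.Basis.finTwoProd ℝ)
    !![b.1 - a.1, c.1 - a.1; b.2 - a.2, c.2 - a.2]
  have hsub : convexHull ℝ {a, b, c} ⊆ (a + ·) '' (L '' (Set.Icc 0 1 ×ˢ Set.Icc 0 1)) := by
    refine convexHull_min ?_ ((((convex_Icc 0 1).prod (convex_Icc 0 1)).linear_image L).translate a)
    have hL : ∀ x : ℝ × ℝ, x ∈ Set.Icc (0 : ℝ) 1 ×ˢ Set.Icc (0 : ℝ) 1 →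
        a + L x ∈ (a + ·) '' (L '' (Set.Icc 0 1 ×ˢ Set.Icc 0 1)) :=
      fun x hx => ⟨L x, ⟨x, hx, rfl⟩, rfl⟩
    rintro _ (rfl | rfl | rfl)
    · simpa [L] using hL (0, 0) (by simp)
    · convert hL (1, 0) (by simp)
      ext <;> simp [L]
    · convert hL (0, 1) (by simp)
      ext <;> simp [L]
  calc volume (convexHull ℝ {a, b, c})
      ≤ volume ((a + ·) '' (L '' (Set.Icc 0 1 ×ˢ Set.Icc 0 1))) := measure_mono hsub
    _ = ENNReal.ofReal |(b.1 - a.1) * (c.2 - a.2) - (c.1 - a.1) * (b.2 - a.2)| := by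
      rw [Set.image_add_left, measure_preimage_add, Measure.addHaar_image_linearMap,
        LinearMap.det_toLin, Matrix.det_fin_two_of, Measure.volume_eq_prod, Measure.prod_prod,
        Real.volume_Icc]
      ring_nf
      simp

namespace DegenerateFarey

def fareyGen : Fin 2 → Matrix (Fin 2) (Fin 2) ℝ :=
  ![!![0, 1; 1, 1], !![1, 1; 0, 1]]

def fareyProd (i : ℕ → Fin 2) : ℕ → Matrix (Fin 2) (Fin 2) ℝ
  | 0 => 1
  | n + 1 => fareyProd i n * fareyGen (i (n + 1))

theorem fareyProd_succ' (i : ℕ → Fin 2) (n : ℕ) :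
    fareyProd i (n + 1) = fareyGen (i 1) * fareyProd (fun k => i (k + 1)) n := by
  induction n with
  | zero => simp [fareyProd]
  | succ n ih => rw [fareyProd, ih, fareyProd, mul_assoc]

/-- `Vmat * E M`, where `E M` acts as `M` on the coordinates `0, 2` and fixes the coordinate `1`;
note `Fe12e d = E (fareyGen d)`. -/
def liftV (M : Matrix (Fin 2) (Fin 2) ℝ) : Matrix (Fin 3) (Fin 3) ℝ :=
  !![M 0 0 + M 1 0, 1, M 0 1 + M 1 1; M 1 0, 1, M 1 1; M 1 0, 0, M 1 1]

theorem liftV_mul_Fe12e (M : Matrix (Fin 2) (Fin 2) ℝ) (d : Fin 2) :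
    liftV M * Fe12e d = liftV (M * fareyGen d) := by
  fin_cases d <;>
  · ext i j
    fin_cases i <;> fin_cases j <;> simp [liftV, Fe12e, fareyGen, mul_apply, Fin.sum_univ_three]
    ring

theorem Vmat_mul_prodSeq (i : ℕ → Fin 2) (n : ℕ) :
    Vmat * prodSeq Fe12e i n = liftV (fareyProd i n) := by
  induction n with
  | zero =>
    ext j k
    fin_cases j <;> fin_cases k <;> simp [prodSeq, fareyProd, Vmat, liftV]
  | succ n ih => rw [prodSeq, fareyProd, ← mul_assoc, ih, liftV_mul_Fe12e]

def colSums (M : Matrix (Fin 2) (Fin 2) ℝ) : ℝ × ℝ := (M 0 0 + M 1 0, M 0 1 + M 1 1)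

def fareyTri (M : Matrix (Fin 2) (Fin 2) ℝ) : Set (ℝ × ℝ) :=
  convexHull ℝ {(1, 0), (M 1 0 / (colSums M).1, M 1 0 / (colSums M).1),
    (M 1 1 / (colSums M).2, M 1 1 / (colSums M).2)}

theorem subTri_eq_fareyTri (i : ℕ → Fin 2) (n : ℕ) :
    subTri Fe12e i n = fareyTri (fareyProd i n) := by
  rw [subTri, Vmat_mul_prodSeq, fareyTri, Set.insert_comm]
  congr 1
  ext z
  simp [Fin.exists_fin_succ, liftV, projPt, colSums, eq_comm]

theorem volume_fareyTri_le (M : Matrix (Fin 2) (Fin 2) ℝ) (h₁ : 0 < (colSums M).1)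
    (h₂ : 0 < (colSums M).2) :
    volume (fareyTri M) ≤ ENNReal.ofReal (|M.det| / ((colSums M).1 * (colSums M).2)) := by
  refine (volume_convexHull_triple_le _ _ _).trans_eq (congrArg ENNReal.ofReal ?_)
  have h : (M 1 0 / (colSums M).1 - 1) * (M 1 1 / (colSums M).2 - 0)
      - (M 1 1 / (colSums M).2 - 1) * (M 1 0 / (colSums M).1 - 0)
      = -M.det / ((colSums M).1 * (colSums M).2) := by
    rw [det_fin_two]
    field_simp
    simp only [colSums]
    ring
  rw [h, abs_div, abs_neg, abs_of_pos (mul_pos h₁ h₂)]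

def stepPair : Fin 2 → ℝ × ℝ → ℝ × ℝ
  | 0, u => (u.2, u.1 + u.2)
  | 1, u => (u.1, u.1 + u.2)

theorem colSums_mul_fareyGen (M : Matrix (Fin 2) (Fin 2) ℝ) (d : Fin 2) :
    colSums (M * fareyGen d) = stepPair d (colSums M) := by
  fin_cases d <;> simp [colSums, fareyGen, stepPair, mul_apply, Fin.sum_univ_two] <;> ring

/-- `tiltedSum t u n` is the sum over words `w ∈ {0,1}ⁿ` of `t ^ #{zeros of w} / (v.1 * v.2)`,
where `v` is obtained from `u` by applying the steps of `w`. -/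
def tiltedSum (t : ℝ) : ℝ × ℝ → ℕ → ℝ
  | u, 0 => 1 / (u.1 * u.2)
  | u, n + 1 => t * tiltedSum t (stepPair 0 u) n + tiltedSum t (stepPair 1 u) n

theorem tiltedSum_nonneg {t : ℝ} (ht : 0 ≤ t) (n : ℕ) {u : ℝ × ℝ} (h₁ : 0 < u.1)
    (h₂ : 0 < u.2) : 0 ≤ tiltedSum t u n := by
  induction n generalizing u with
  | zero => exact (one_div_pos.2 (mul_pos h₁ h₂)).le
  | succ n ih =>
    have h₀ := ih (u := stepPair 0 u) h₂ (add_pos h₁ h₂)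
    have h₁ := ih (u := stepPair 1 u) h₁ (add_pos h₁ h₂)
    exact add_nonneg (mul_nonneg ht h₀) h₁

theorem two_step_weight_le {a b : ℝ} (ha : 0 < a) (hab : a ≤ b) :
    6 / 5 * (6 / 5 * (1 / ((a + b) * (b + (a + b)))) + 1 / (b * (b + (a + b))))
      + (6 / 5 * (1 / ((a + b) * (a + (a + b)))) + 1 / (a * (a + (a + b))))
      ≤ 88 / 75 * (1 / (a * b)) := by
  have hb : 0 < b := ha.trans_le hab
  rw [← sub_nonneg]
  have key : 88 / 75 * (1 / (a * b))
      - (6 / 5 * (6 / 5 * (1 / ((a + b) * (b + (a + b)))) + 1 / (b * (b + (a + b))))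
        + (6 / 5 * (1 / ((a + b) * (a + (a + b)))) + 1 / (a * (a + (a + b)))))
      = (69 * a ^ 2 * (b - a) + 91 * a * (b - a) ^ 2 + 26 * (b - a) ^ 3)
        / (75 * a * b * (a + b) * (a + 2 * b) * (2 * a + b)) := by
    field_simp
    ring
  have hba : 0 ≤ b - a := sub_nonneg.2 hab
  rw [key]
  positivity

theorem tiltedSum_two_mul_le (m : ℕ) {u : ℝ × ℝ} (h₁ : 0 < u.1) (h₁₂ : u.1 ≤ u.2) :
    tiltedSum (6 / 5) u (2 * m) ≤ (88 / 75) ^ m / (u.1 * u.2) := by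
  induction m generalizing u with
  | zero => simp [tiltedSum]
  | succ m ih =>
    obtain ⟨a, b⟩ := u
    dsimp only at h₁ h₁₂ ⊢
    have hb : 0 < b := h₁.trans_le h₁₂
    have h00 := ih (u := (a + b, b + (a + b))) (by positivity) (by linarith)
    have h01 := ih (u := (b, b + (a + b))) hb (by linarith)
    have h10 := ih (u := (a + b, a + (a + b))) (by positivity) (by linarith)
    have h11 := ih (u := (a, a + (a + b))) h₁ (by linarith)
    calc tiltedSum (6 / 5) (a, b) (2 * (m + 1))
        = 6 / 5 * (6 / 5 * tiltedSum (6 / 5) (a + b, b + (a + b)) (2 * m)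
            + tiltedSum (6 / 5) (b, b + (a + b)) (2 * m))
          + (6 / 5 * tiltedSum (6 / 5) (a + b, a + (a + b)) (2 * m)
            + tiltedSum (6 / 5) (a, a + (a + b)) (2 * m)) := by
          rw [mul_add_one]
          rfl
      _ ≤ 6 / 5 * (6 / 5 * ((88 / 75) ^ m / ((a + b) * (b + (a + b))))
            + (88 / 75) ^ m / (b * (b + (a + b))))
          + (6 / 5 * ((88 / 75) ^ m / ((a + b) * (a + (a + b))))
            + (88 / 75) ^ m / (a * (a + (a + b)))) := by gcongr
      _ = (88 / 75) ^ m * (6 / 5 * (6 / 5 * (1 / ((a + b) * (b + (a + b))))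
            + 1 / (b * (b + (a + b))))
          + (6 / 5 * (1 / ((a + b) * (a + (a + b)))) + 1 / (a * (a + (a + b))))) := by ring
      _ ≤ (88 / 75) ^ m * (88 / 75 * (1 / (a * b))) := by
          gcongr
          exact two_step_weight_le h₁ h₁₂
      _ = (88 / 75) ^ (m + 1) / (a * b) := by ring

def zeroCount (i : ℕ → Fin 2) (n : ℕ) : ℕ :=
  ((Finset.range n).filter fun k => i (k + 1) = 0).card

theorem zeroCount_succ (i : ℕ → Fin 2) (n : ℕ) :
    zeroCount i (n + 1) = zeroCount (fun k => i (k + 1)) n + if i 1 = 0 then 1 else 0 := by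
  simp only [zeroCount, Finset.card_filter]
  rw [Finset.sum_range_succ']

theorem zeroCount_add_card_filter_eq_one (i : ℕ → Fin 2) (n : ℕ) :
    zeroCount i n + ((Finset.range n).filter fun k => i (k + 1) = 1).card = n := by
  have h : ∀ x : Fin 2, x = 0 ↔ ¬x = 1 := by decide
  simp only [zeroCount, h]
  rw [add_comm, Finset.card_filter_add_card_filter_not, Finset.card_range]

/-- `coverSet M n k` is the union of the triangles `fareyTri (M * w)` over the products `w` of
`n` generators at least `k` of which are `fareyGen 0` (the truncated `k - 1` only enlarges it). -/
def coverSet : Matrix (Fin 2) (Fin 2) ℝ → ℕ → ℕ → Set (ℝ × ℝ)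
  | M, 0, k => if k = 0 then fareyTri M else ∅
  | M, n + 1, k => coverSet (M * fareyGen 0) n (k - 1) ∪ coverSet (M * fareyGen 1) n k

theorem fareyTri_subset_coverSet (M : Matrix (Fin 2) (Fin 2) ℝ) (i : ℕ → Fin 2) {n k : ℕ}
    (hk : k ≤ zeroCount i n) : fareyTri (M * fareyProd i n) ⊆ coverSet M n k := by
  induction n generalizing M i k with
  | zero =>
    obtain rfl : k = 0 := by simpa [zeroCount] using hk
    simp [fareyProd, coverSet]
  | succ n ih =>
    rw [fareyProd_succ', ← mul_assoc, coverSet]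
    rw [zeroCount_succ] at hk
    obtain h | h : i 1 = 0 ∨ i 1 = 1 := by omega
    · rw [h] at hk ⊢
      exact (ih _ _ (by simp at hk; omega)).trans Set.subset_union_left
    · rw [h] at hk ⊢
      exact (ih _ _ (by simpa using hk)).trans Set.subset_union_right

theorem volume_coverSet_le {t : ℝ} (ht : 1 ≤ t) (n : ℕ) (M : Matrix (Fin 2) (Fin 2) ℝ)
    (k : ℕ) (h₁ : 0 < (colSums M).1) (h₂ : 0 < (colSums M).2) :
    volume (coverSet M n k) ≤ ENNReal.ofReal (|M.det| * tiltedSum t (colSums M) n / t ^ k) := by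
  induction n generalizing M k with
  | zero =>
    by_cases hk : k = 0
    · subst hk
      simpa only [coverSet, if_true, tiltedSum, pow_zero, div_one, mul_one_div] using
        volume_fareyTri_le M h₁ h₂
    · simp [coverSet, hk]
  | succ n ih =>
    have hdet : ∀ d, |(M * fareyGen d).det| = |M.det| := by
      intro d
      rw [det_mul, abs_mul]
      fin_cases d <;> simp [fareyGen, det_fin_two]
    have hpos : ∀ d, 0 < (colSums (M * fareyGen d)).1 ∧ 0 < (colSums (M * fareyGen d)).2 := by
      intro d
      rw [colSums_mul_fareyGen]
      fin_cases d
      · exact ⟨h₂, add_pos h₁ h₂⟩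
      · exact ⟨h₁, add_pos h₁ h₂⟩
    have ht₀ : 0 < t := one_pos.trans_le ht
    have hT : ∀ d, 0 ≤ tiltedSum t (stepPair d (colSums M)) n := fun d => by
      simpa [colSums_mul_fareyGen] using tiltedSum_nonneg ht₀.le n (hpos d).1 (hpos d).2
    have hshift : 1 / t ^ (k - 1) ≤ t / t ^ k := by
      rcases k with _ | k
      · simpa using ht
      · rw [Nat.add_sub_cancel, pow_succ, div_mul_cancel_right₀ ht₀.ne', one_div]
    have h₀ := ih _ (k - 1) (hpos 0).1 (hpos 0).2
    have h₁ := ih _ k (hpos 1).1 (hpos 1).2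
    rw [hdet, colSums_mul_fareyGen] at h₀ h₁
    calc volume (coverSet M (n + 1) k)
        ≤ volume (coverSet (M * fareyGen 0) n (k - 1)) + volume (coverSet (M * fareyGen 1) n k) :=
          measure_union_le _ _
      _ ≤ ENNReal.ofReal (|M.det| * tiltedSum t (stepPair 0 (colSums M)) n * (t / t ^ k))
          + ENNReal.ofReal (|M.det| * tiltedSum t (stepPair 1 (colSums M)) n / t ^ k) := by
          refine add_le_add (h₀.trans (ENNReal.ofReal_le_ofReal ?_)) h₁
          rw [div_eq_mul_one_div]
          gcongr
          exact mul_nonneg (abs_nonneg _) (hT 0)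
      _ = ENNReal.ofReal (|M.det| * tiltedSum t (colSums M) (n + 1) / t ^ k) := by
          rw [← ENNReal.ofReal_add (by have := hT 0; positivity) (by have := hT 1; positivity),
            tiltedSum]
          ring_nf

theorem volume_coverSet_one_le (j : ℕ) :
    volume (coverSet 1 (100 * j) (49 * j)) ≤
      ENNReal.ofReal ((88 / 75) ^ 50 / (6 / 5) ^ 49) ^ j := by
  have hcol : colSums 1 = (1, 1) := by simp [colSums]
  have hT : tiltedSum (6 / 5) (1, 1) (100 * j) ≤ (88 / 75) ^ (50 * j) := by
    simpa [show 100 * j = 2 * (50 * j) by ring] using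
      tiltedSum_two_mul_le (50 * j) (u := (1, 1)) one_pos le_rfl
  calc volume (coverSet 1 (100 * j) (49 * j))
      ≤ ENNReal.ofReal (|det 1| * tiltedSum (6 / 5) (colSums 1) (100 * j) / (6 / 5) ^ (49 * j)) :=
        volume_coverSet_le (by norm_num) _ 1 _ (by simp [hcol]) (by simp [hcol])
    _ ≤ ENNReal.ofReal ((88 / 75) ^ (50 * j) / (6 / 5) ^ (49 * j)) := by
        rw [det_one, abs_one, one_mul, hcol]
        gcongr
    _ = ENNReal.ofReal ((88 / 75) ^ 50 / (6 / 5) ^ 49) ^ j := by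
        rw [← ENNReal.ofReal_pow (by positivity), pow_mul, pow_mul, ← div_pow]

theorem tsum_volume_coverSet_ne_top :
    ∑' j, volume (coverSet 1 (100 * j) (49 * j)) ≠ ⊤ :=
  ne_top_of_le_ne_top (tsum_geometric_lt_top.2 (ENNReal.ofReal_lt_one.2 (by norm_num))).ne
    (ENNReal.tsum_le_tsum volume_coverSet_one_le)

theorem eventually_le_zeroCount {i : ℕ → Fin 2}
    (hi : Tendsto (fun n : ℕ => (((Finset.range n).filter fun k => i (k + 1) = 1).card : ℝ) / n)
      atTop (nhds (1 / 2))) :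
    ∀ᶠ j in atTop, 49 * j ≤ zeroCount i (100 * j) := by
  have hlt := (tendsto_id.const_mul_atTop' (show 0 < 100 by norm_num)).eventually
    (hi.eventually_lt_const (show (1 / 2 : ℝ) < 51 / 100 by norm_num))
  filter_upwards [hlt, eventually_ge_atTop 1] with j hj hj₁
  have hcount := zeroCount_add_card_filter_eq_one i (100 * j)
  have hn : (0 : ℝ) < (100 * j : ℕ) := by exact_mod_cast (by omega : 0 < 100 * j)
  simp only [id, div_lt_iff₀ hn] at hj
  push_cast at hj
  have hones :
      (((Finset.range (100 * j)).filter fun k => i (k + 1) = 1).card : ℝ) < (51 * j : ℕ) := by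
    push_cast
    linarith
  replace hones : ((Finset.range (100 * j)).filter fun k => i (k + 1) = 1).card < 51 * j := by
    exact_mod_cast hones
  omega

end DegenerateFarey

open DegenerateFarey in
theorem stmt17 :
    volume {z : ℝ × ℝ | (z.2 < z.1 ∧ z.1 < 1 ∧ 0 < z.2) ∧
      ∃ i : ℕ → Fin 2,
        (∀ n : ℕ, 1 ≤ n → z ∈ subTri Fe12e i n) ∧
        Tendsto
          (fun n : ℕ =>
            (((Finset.range n).filter fun k => i (k + 1) = 1).card : ℝ) / n)
          atTop (nhds (1 / 2))} = 0 := by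
  refine measure_mono_null ?_ (measure_liminf_atTop_eq_zero tsum_volume_coverSet_ne_top)
  rintro z ⟨-, i, hmem, hfreq⟩
  rw [mem_liminf_iff_eventually_mem]
  filter_upwards [eventually_le_zeroCount hfreq, eventually_ge_atTop 1] with j hj hj₁
  refine fareyTri_subset_coverSet 1 i hj ?_
  rw [one_mul, ← subTri_eq_fareyTri]
  exact hmem _ (by omega)
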